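/- Every word w_k of the Kolakoski fan is a prefix of the classical Kolakoski sequence K. -/
import Mathlib


/-- Sum of the first `m` letters of `K` (indices `0, …, m-1`), i.e. `K₁ + ⋯ + K_m`
in the paper's 1-indexed notation. -/
def psum (K : ℕ → ℕ) (m : ℕ) : ℕ := ∑ i ∈ Finset.range m, K i

/-- `K` equals the sequence of its own run lengths: the `m`-th run of `K` occupies
exactly the positions in `[psum K m, psum K (m+1))` (hence has length `K m`);
`K` is constant on each such block, and consecutive blocks carry different
symbols (which is exactly maximality of the runs). -/
def IsRunSelf (K : ℕ → ℕ) : Prop :=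
  ∀ m : ℕ,
    (∀ i : ℕ, psum K m ≤ i → i < psum K (m + 1) → K i = K (psum K m)) ∧
    K (psum K m) ≠ K (psum K (m + 1))

/-- The classical Kolakoski sequence, 0-indexed: `K i` is the letter `K_{i+1}` of
the paper.  It takes values in `{1, 2}`, starts with `1`, and equals the
sequence of its own run lengths. -/
def IsKolakoski (K : ℕ → ℕ) : Prop :=
  (∀ n, K n = 1 ∨ K n = 2) ∧ K 0 = 1 ∧ IsRunSelf K

/-- Expansion step of the Kolakoski fan: the `i`-th run of `expand w` has length
equal to the `i`-th letter of `w`, the runs alternating between blocks of `1`s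
and blocks of `2`s, starting with a block of `1`s. -/
def expand (w : List ℕ) : List ℕ :=
  (List.range w.length).flatMap fun i =>
    List.replicate (w.getD i 0) (if i % 2 = 0 then 1 else 2)

/-- The Kolakoski fan: `fan 0 = 122` and `fan (k+1) = expand (fan k)`
(so `fan 1 = 12211`). -/
def fan : ℕ → List ℕ
  | 0 => [1, 2, 2]
  | k + 1 => expand (fan k)

lemma kval (K : ℕ → ℕ) (hK : IsKolakoski K) :
    ∀ m, K (psum K m) = if m % 2 = 0 then 1 else 2 := by
  intro m
  induction m with
  | zero => simp [psum, hK.2.1]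
  | succ m ih =>
    have hne := (hK.2.2 m).2
    have h2 := hK.1 (psum K (m + 1))
    rw [ih] at hne
    split_ifs at hne ⊢ <;> omega

lemma expand_spec (K : ℕ → ℕ) (hK : IsKolakoski K) (w : List ℕ)
    (hw : ∀ j < w.length, w.getD j 0 = K j) :
    (expand w).length = psum K w.length ∧
      ∀ j < psum K w.length, (expand w).getD j 0 = K j := by
  suffices h : ∀ n ≤ w.length,
      ((List.range n).flatMap fun i =>
        List.replicate (w.getD i 0) (if i % 2 = 0 then 1 else 2)).length = psum K n ∧
      ∀ j < psum K n, ((List.range n).flatMap fun i =>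
        List.replicate (w.getD i 0) (if i % 2 = 0 then 1 else 2)).getD j 0 = K j by
    exact h w.length le_rfl
  intro n hn
  induction n with
  | zero => simp [psum]
  | succ n ih =>
    obtain ⟨hl, hm⟩ := ih (by omega)
    have hwn : w.getD n 0 = K n := hw n (by omega)
    have hps : psum K (n + 1) = psum K n + K n := Finset.sum_range_succ _ _
    rw [List.range_succ, List.flatMap_append]
    simp only [List.flatMap_cons, List.flatMap_nil, List.append_nil]
    constructor
    · rw [List.length_append, hl, List.length_replicate, hwn, hps]
    · intro j hj
      by_cases hjl : j < psum K n
      · rw [List.getD_append _ _ _ _ (lt_of_lt_of_eq hjl hl.symm)]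
        exact hm j hjl
      · push_neg at hjl
        rw [List.getD_append_right _ _ _ _ (hl.le.trans hjl)]
        have hidx : j - ((List.range n).flatMap fun i =>
            List.replicate (w.getD i 0) (if i % 2 = 0 then 1 else 2)).length <
            (List.replicate (w.getD n 0) (if n % 2 = 0 then 1 else 2)).length := by
          rw [hl, List.length_replicate, hwn]; omega
        rw [List.getD_eq_getElem _ _ hidx, List.getElem_replicate]
        have hKj : K j = K (psum K n) := (hK.2.2 n).1 j hjl hj
        rw [hKj, kval K hK n]

theorem fan_prefix_kolakoski (K : ℕ → ℕ) (hK : IsKolakoski K) (k : ℕ) :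
    ∀ j < (fan k).length, (fan k).getD j 0 = K j := by
  induction k with
  | zero =>
    have h0 := hK.2.1
    have hps1 : psum K 1 = 1 := by simp [psum, h0]
    have hne := (hK.2.2 0).2
    have hps0 : psum K 0 = 0 := by simp [psum]
    rw [hps0, hps1] at hne
    have h1 : K 1 = 2 := by rcases hK.1 1 with h | h <;> omega
    have hps2 : psum K 2 = 3 := by simp [psum, Finset.sum_range_succ, h0, h1]
    have hps2' : psum K (1 + 1) = 3 := hps2
    have h2 : K 2 = 2 := by
      have := (hK.2.2 1).1 2 (by omega) (by omega)
      rw [hps1] at this; omega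
    intro j hj
    have hlen : (fan 0).length = 3 := rfl
    rw [hlen] at hj
    interval_cases j <;> simp [fan, h0, h1, h2]
  | succ k ih =>
    obtain ⟨hl, hm⟩ := expand_spec K hK (fan k) ih
    intro j hj
    show (expand (fan k)).getD j 0 = K j
    exact hm j (by rw [← hl]; exact hj)
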